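/- arXiv:alg-geom/9707009 — 5 statements merged into one kernel-verified Lean document; each statement's English description precedes it below -/
import Mathlib

section
/- The poset of bracketings B(n) of n variables (ordered by removing pairs of brackets) is isomorphic to the poset I(n) of sets of pairwise compatible proper subintervals of [1,n-1], ordered by reverse inclusion. Here the isomorphism sends an interval [i,j] to the bracketing inserting a bracket around positions i through j+1, and a set of compatible intervals to the corresponding composite bracketing. -/
/-- A proper subinterval `[p.1, p.2]` of `[1, n-1]`: an element of `P(n)`. -/
def PInt (n : ℕ) : Type :=
  {p : ℕ × ℕ // 1 ≤ p.1 ∧ p.1 ≤ p.2 ∧ p.2 ≤ n - 1 ∧ ¬(p.1 = 1 ∧ p.2 = n - 1)}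

/-- Two intervals are compatible: one is contained in the other, or their union is not an
interval properly containing both (i.e. they are disjoint and non-adjacent). -/
def CompatPInt {n : ℕ} (p q : PInt n) : Prop :=
  (p.1.1 ≤ q.1.1 ∧ q.1.2 ≤ p.1.2) ∨ (q.1.1 ≤ p.1.1 ∧ p.1.2 ≤ q.1.2) ∨
    p.1.2 + 1 < q.1.1 ∨ q.1.2 + 1 < p.1.1

/-- The poset `I(n)`: sets of pairwise compatible proper subintervals of `[1, n-1]`,
ordered by reverse inclusion (`ι ⪯ κ` iff `κ ⊆ ι`). -/
def IPoset (n : ℕ) : Type :=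
  {ι : Set (PInt n) // ι.Pairwise CompatPInt}

instance (n : ℕ) : PartialOrder (IPoset n) where
  le a b := b.1 ⊆ a.1
  le_refl a := le_refl a.1
  le_trans a b c hab hbc := Set.Subset.trans hbc hab
  le_antisymm a b hab hba := Subtype.ext (Set.Subset.antisymm hba hab)

/-- A bracket `(p.1 … p.2)` on the variables `1, …, n`: a subinterval of `[1, n]` of
length at least two, not the full interval.  -/
def Brk (n : ℕ) : Type :=
  {p : ℕ × ℕ // 1 ≤ p.1 ∧ p.1 < p.2 ∧ p.2 ≤ n ∧ ¬(p.1 = 1 ∧ p.2 = n)}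

/-- Two brackets may occur in a common meaningful bracketing iff they are nested or
disjoint. -/
def CompatBrk {n : ℕ} (p q : Brk n) : Prop :=
  (p.1.1 ≤ q.1.1 ∧ q.1.2 ≤ p.1.2) ∨ (q.1.1 ≤ p.1.1 ∧ p.1.2 ≤ q.1.2) ∨
    p.1.2 < q.1.1 ∨ q.1.2 < p.1.1

/-- The poset `B(n)` of meaningful bracketings of `n` variables: a bracketing is a set of
pairwise compatible brackets, and `b' ≺ b''` iff `b''` is obtained from `b'` by removing
brackets. -/
def BPoset (n : ℕ) : Type :=
  {β : Set (Brk n) // β.Pairwise CompatBrk}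

instance (n : ℕ) : PartialOrder (BPoset n) where
  le a b := b.1 ⊆ a.1
  le_refl a := le_refl a.1
  le_trans a b c hab hbc := Set.Subset.trans hbc hab
  le_antisymm a b hab hba := Subtype.ext (Set.Subset.antisymm hba hab)

def pintEquivBrk (n : ℕ) : PInt n ≃ Brk n where
  toFun p := ⟨(p.1.1, p.1.2 + 1), by obtain ⟨⟨a, b⟩, h⟩ := p; dsimp only at h ⊢; omega⟩
  invFun b := ⟨(b.1.1, b.1.2 - 1), by obtain ⟨⟨a, b⟩, h⟩ := b; dsimp only at h ⊢; omega⟩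
  left_inv p := by obtain ⟨⟨a, b⟩, h⟩ := p; rfl
  right_inv b := by obtain ⟨⟨a, b⟩, h⟩ := b; apply Subtype.ext; dsimp only; congr 1; omega

@[simp]
lemma val_pintEquivBrk {n : ℕ} (p : PInt n) : (pintEquivBrk n p).1 = (p.1.1, p.1.2 + 1) := rfl

/-- Adjacent intervals `[i, j]`, `[j+1, k]` are incompatible because the brackets
`(i … j+1)` and `(j+1 … k+1)` overlap in the variable `j+1`. -/
lemma compatBrk_pintEquivBrk_iff {n : ℕ} (p q : PInt n) :
    CompatBrk (pintEquivBrk n p) (pintEquivBrk n q) ↔ CompatPInt p q := by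
  simp only [CompatBrk, CompatPInt, val_pintEquivBrk]
  omega

def iPosetOrderIsoBPoset (n : ℕ) : IPoset n ≃o BPoset n where
  toFun ι := ⟨pintEquivBrk n '' ι.1,
    ((pintEquivBrk n).injective.injOn.pairwise_image).2 fun _ hp _ hq hpq =>
      (compatBrk_pintEquivBrk_iff _ _).2 (ι.2 hp hq hpq)⟩
  invFun β := ⟨pintEquivBrk n ⁻¹' β.1, fun _ hp _ hq hpq =>
    (compatBrk_pintEquivBrk_iff _ _).1 (β.2 hp hq ((pintEquivBrk n).injective.ne hpq))⟩
  left_inv _ := Subtype.ext (Set.preimage_image_eq _ (pintEquivBrk n).injective)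
  right_inv _ := Subtype.ext (Set.image_preimage_eq _ (pintEquivBrk n).surjective)
  map_rel_iff' := Set.image_subset_image_iff (pintEquivBrk n).injective

/-- Shnider–Sternberg: the posets `B(n)` and `I(n)` are isomorphic, the
isomorphism sending an interval `[i, j]` to the bracket around positions `i, …, j+1`, and
a set of compatible intervals to the corresponding composite bracketing. -/
theorem bracketings_orderIso_compatible_intervals (n : ℕ) :
    ∃ e : IPoset n ≃o BPoset n,
      ∀ ι : IPoset n,
        (fun b : Brk n => b.1) '' (e ι).1 =
          (fun p : PInt n => (p.1.1, p.1.2 + 1)) '' ι.1 := by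
  exact ⟨iPosetOrderIsoBPoset n, fun ι => Set.image_image _ _ _⟩
end

section
/- The polytope K_n = {(t_1,...,t_{n-1}) ∈ ℝ^{n-1} : Σ_{k=1}^{n-1} t_k = 3^{n-1}, and Σ_{k∈I} t_k ≥ 3^{#I} for all proper subintervals I of [1,n-1]} has nonempty interior in the hyperplane {Σ t_k = 3^{n-1}}; in particular it is an (n-2)-dimensional convex polytope. -/
/-!
At the point of the hyperplane with all coordinates equal to `3^(n-1)/(n-1)`, a proper
subinterval with `m` elements has coordinate sum `m 3^(n-1)/(n-1)`, which strictly exceeds `3^m`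
because `m + d < m 3^d` for `m, d ≥ 1` (Bernoulli). Finitely many strict linear inequalities cut
out an open set, so a whole neighbourhood of this point within the hyperplane lies in `K_n`.
Convexity holds because `K_n` is a hyperplane intersected with half-spaces.
-/

open Finset

/-- The Shnider–Sternberg convex realization of the associahedron `K_n`, as a subset of
`ℝ^{n-1}`.  Coordinates are indexed by `Fin (n-1)` (representing the interval `[1, n-1]`);
a proper subinterval of `[1, n-1]` is `Finset.Icc i j` for `i ≤ j`, excluding the whole
interval; `c(I) = 3 ^ #I`. -/
def KnPoly (n : ℕ) : Set (Fin (n - 1) → ℝ) :=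
  {t | (∑ k, t k) = 3 ^ (n - 1) ∧
    ∀ i j : Fin (n - 1), i ≤ j → ¬((i : ℕ) = 0 ∧ (j : ℕ) = n - 2) →
      (3 : ℝ) ^ (Finset.Icc i j).card ≤ ∑ k ∈ Finset.Icc i j, t k}

lemma three_pow_mul_lt_mul_three_pow {m N : ℕ} (hm : 1 ≤ m) (hmN : m < N) :
    (3 : ℝ) ^ m * N < m * 3 ^ N := by
  obtain ⟨d, rfl⟩ : ∃ d, N = m + d := ⟨N - m, by omega⟩
  have hd : (1 : ℝ) ≤ d := by exact_mod_cast (by omega : 1 ≤ d)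
  have hm' : (1 : ℝ) ≤ m := by exact_mod_cast hm
  have bernoulli : 1 + d * 2 ≤ (3 : ℝ) ^ d := by
    simpa [show (1 : ℝ) + 2 = 3 by norm_num] using one_add_mul_le_pow (a := (2 : ℝ)) (by norm_num) d
  have key : (m + d : ℝ) < m * 3 ^ d := by nlinarith
  calc (3 : ℝ) ^ m * ↑(m + d) = 3 ^ m * (m + d) := by push_cast; rfl
    _ < 3 ^ m * (m * 3 ^ d) := by gcongr
    _ = m * 3 ^ (m + d) := by ring

lemma isLinearMap_sum_apply {ι : Type*} (s : Finset ι) :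
    IsLinearMap ℝ fun t : ι → ℝ => ∑ k ∈ s, t k :=
  ⟨fun _ _ => sum_add_distrib, fun c t => (mul_sum s t c).symm⟩

lemma card_Icc_of_proper {n : ℕ} {i j : Fin (n - 1)} (hij : i ≤ j)
    (hproper : ¬((i : ℕ) = 0 ∧ (j : ℕ) = n - 2)) :
    1 ≤ #(Icc i j) ∧ #(Icc i j) < n - 1 := by
  rw [Fin.card_Icc]
  have : (i : ℕ) ≤ j := hij
  omega

lemma convex_KnPoly (n : ℕ) : Convex ℝ (KnPoly n) := by
  have h : KnPoly n = {t | ∑ k, t k = 3 ^ (n - 1)} ∩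
      ⋂ (i : Fin (n - 1)) (j : Fin (n - 1)) (_ : i ≤ j) (_ : ¬((i : ℕ) = 0 ∧ (j : ℕ) = n - 2)),
        {t | (3 : ℝ) ^ #(Icc i j) ≤ ∑ k ∈ Icc i j, t k} := by
    ext; simp only [KnPoly, Set.mem_ofPred_eq, Set.mem_inter_iff, Set.mem_iInter]
  rw [h]
  exact (convex_hyperplane (isLinearMap_sum_apply _) _).inter <|
    convex_iInter fun i => convex_iInter fun j => convex_iInter fun _ => convex_iInter fun _ =>
      convex_halfSpace_ge (isLinearMap_sum_apply _) _

def KnStrict (n : ℕ) : Set (Fin (n - 1) → ℝ) :=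
  {t | ∀ i j : Fin (n - 1), i ≤ j → ¬((i : ℕ) = 0 ∧ (j : ℕ) = n - 2) →
      (3 : ℝ) ^ #(Icc i j) < ∑ k ∈ Icc i j, t k}

lemma isOpen_KnStrict (n : ℕ) : IsOpen (KnStrict n) := by
  simp only [KnStrict, Set.ofPred_forall]
  exact isOpen_iInter_of_finite fun i => isOpen_iInter_of_finite fun j =>
    isOpen_iInter_of_finite fun _ => isOpen_iInter_of_finite fun _ =>
      isOpen_lt continuous_const (continuous_finsetSum _ fun k _ => continuous_apply k)

lemma mem_KnPoly_of_mem_KnStrict {n : ℕ} {t : Fin (n - 1) → ℝ} (ht : t ∈ KnStrict n)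
    (hsum : ∑ k, t k = 3 ^ (n - 1)) : t ∈ KnPoly n :=
  ⟨hsum, fun i j hij hproper => (ht i j hij hproper).le⟩

noncomputable def simplexCenter (n : ℕ) : Fin (n - 1) → ℝ := fun _ => 3 ^ (n - 1) / (n - 1 : ℕ)

lemma sum_simplexCenter {n : ℕ} (hn : 2 ≤ n) : ∑ k, simplexCenter n k = 3 ^ (n - 1) := by
  have : ((n - 1 : ℕ) : ℝ) ≠ 0 := by exact_mod_cast (by omega : n - 1 ≠ 0)
  simp only [simplexCenter, sum_const, card_univ, Fintype.card_fin, nsmul_eq_mul]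
  field_simp

lemma simplexCenter_mem_KnStrict (n : ℕ) : simplexCenter n ∈ KnStrict n := by
  intro i j hij hproper
  obtain ⟨hpos, hlt⟩ := card_Icc_of_proper hij hproper
  have hN : (0 : ℝ) < (n - 1 : ℕ) := by exact_mod_cast (by omega : 0 < n - 1)
  simp only [simplexCenter, sum_const, nsmul_eq_mul, ← mul_div_assoc, lt_div_iff₀ hN]
  exact three_pow_mul_lt_mul_three_pow hpos hlt

/-- `K_n` has nonempty interior in the hyperplane `{∑ t_k = 3^{n-1}}`
(interior taken relative to the hyperplane); in particular it is an
`(n-2)`-dimensional convex polytope. -/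
theorem KnPoly_nonempty_relative_interior (n : ℕ) (hn : 2 ≤ n) :
    (∃ t ∈ KnPoly n, ∃ ε > (0 : ℝ), ∀ s : Fin (n - 1) → ℝ,
        (∑ k, s k) = 3 ^ (n - 1) → dist s t < ε → s ∈ KnPoly n) ∧
      Convex ℝ (KnPoly n) := by
  have hcenter := simplexCenter_mem_KnStrict n
  obtain ⟨ε, hε, hball⟩ := Metric.isOpen_iff.mp (isOpen_KnStrict n) _ hcenter
  refine ⟨⟨simplexCenter n, mem_KnPoly_of_mem_KnStrict hcenter (sum_simplexCenter hn), ε, hε,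
    fun s hsum hdist => mem_KnPoly_of_mem_KnStrict (hball hdist) hsum⟩, convex_KnPoly n⟩
end

section
/- For each set ι of pairwise compatible proper subintervals of [1,n-1], the intersection of K_n with the hyperplanes P_I = {Σ_{k∈I} t_k = 3^{#I}} for I ∈ ι is a nonempty face of K_n of dimension n - #ι - 2, and every face of K_n arises this way; consequently the face poset of K_n is isomorphic to I(n). -/
open Finset

/-- The pair `(p.1, p.2)` encodes a proper subinterval `[p.1, p.2]` of `[1, n-1]`
(in `Fin (n-1)` coordinates). -/
def ProperInt (n : ℕ) (p : Fin (n - 1) × Fin (n - 1)) : Prop :=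
  p.1 ≤ p.2 ∧ ¬((p.1 : ℕ) = 0 ∧ (p.2 : ℕ) = n - 2)

/-- Two intervals are compatible: one contains the other, or their union is not an
interval (they are disjoint and non-adjacent). -/
def CompatInt (n : ℕ) (p q : Fin (n - 1) × Fin (n - 1)) : Prop :=
  (p.1 ≤ q.1 ∧ q.2 ≤ p.2) ∨ (q.1 ≤ p.1 ∧ p.2 ≤ q.2) ∨
    (p.2 : ℕ) + 1 < (q.1 : ℕ) ∨ (q.2 : ℕ) + 1 < (p.1 : ℕ)

/-- The subset of `K_n` cut out by the hyperplanes `P_I`, `I ∈ ι`. -/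
def KnFace (n : ℕ) (ι : Finset (Fin (n - 1) × Fin (n - 1))) : Set (Fin (n - 1) → ℝ) :=
  {t | t ∈ KnPoly n ∧ ∀ p ∈ ι,
    (∑ k ∈ Finset.Icc p.1 p.2, t k) = 3 ^ (Finset.Icc p.1 p.2).card}

/-!
Let `T` be the tubing formed by the intervals of `ι` and the whole interval. The equations
`∑_{k ∈ J} t k = 3 ^ #J`, `J ∈ T`, are independent: every tube has a free point, lying in no
smaller tube, and these points make the system triangular. So the face has dimension
`(n - 1) - #T` once it contains a point at which every other inequality is strict. Such a point
is built by letting each tube spread its excess `3 ^ #J - ∑ 3 ^ #C` (over its maximal sub-tubes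
`C`) evenly over its free points; the growth of `3 ^ ·` makes every interval outside `T` strict.

Conversely, interval sums are modular, so two crossing intervals cannot both be tight: the
intervals tight on a whole exposed face are compatible, and the face is the `KnFace` they define.
-/

open Filter Topology

namespace Associahedron

theorem sum_three_pow_le {α : Type*} {S : Finset α} (g : α → ℕ) (hg : ∀ x ∈ S, 1 ≤ g x) :
    ∑ x ∈ S, (3 : ℝ) ^ g x ≤ 3 ^ ∑ x ∈ S, g x := by
  rcases S.eq_empty_or_nonempty with rfl | hS
  · simp
  induction hS using Finset.Nonempty.cons_induction with
  | singleton a => simp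
  | cons a S ha hS ih =>
    have h3a : (2 : ℝ) ≤ 3 ^ g a :=
      le_trans (by norm_num) (pow_le_pow_right₀ (by norm_num) (hg a (mem_cons_self a S)))
    have hg' : ∀ x ∈ S, 1 ≤ g x := fun x hx => hg x (mem_cons_of_mem hx)
    obtain ⟨x, hx⟩ := hS
    have h3S : (2 : ℝ) ≤ 3 ^ ∑ x ∈ S, g x :=
      le_trans (by norm_num) (pow_le_pow_right₀ (by norm_num)
        (le_trans (hg' x hx) (single_le_sum (fun i _ => Nat.zero_le (g i)) hx)))
    rw [sum_cons, sum_cons, pow_add]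
    calc 3 ^ g a + ∑ x ∈ S, (3 : ℝ) ^ g x ≤ 3 ^ g a + 3 ^ ∑ x ∈ S, g x := by
          gcongr; exact ih hg'
      _ ≤ _ := add_le_mul h3a h3S

theorem mul_three_pow_lt {f s : ℕ} (hf : 1 ≤ f) (hfs : f < s) : s * 3 ^ f < f * 3 ^ s := by
  induction s, hfs using Nat.le_induction with
  | base => rw [pow_succ]; nlinarith [Nat.one_le_pow f 3 (by norm_num)]
  | succ s hs ih =>
    have : 1 ≤ s := by omega
    rw [pow_succ]
    nlinarith [Nat.one_le_pow f 3 (by norm_num)]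

theorem mul_three_pow_le {f s : ℕ} (hf : 1 ≤ f) (hfs : f ≤ s) : s * 3 ^ f ≤ f * 3 ^ s := by
  rcases hfs.eq_or_lt with rfl | hlt
  · exact le_rfl
  · exact (mul_three_pow_lt hf hlt).le

theorem mul_three_pow_le_two_mul {f s m L : ℕ} (hf : 1 ≤ f) (hm : m < L) (hs : s + m ≤ L + f) :
    s * 3 ^ m ≤ 2 * f * 3 ^ (L - 1) := by
  obtain ⟨g, rfl⟩ : ∃ g, L = m + g + 1 := ⟨L - m - 1, by omega⟩
  have hg : g + 1 ≤ 3 ^ g := Nat.lt_pow_self (by norm_num)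
  rw [show m + g + 1 - 1 = g + m by omega, pow_add]
  have : s ≤ 2 * f * 3 ^ g := by nlinarith
  rw [← mul_assoc]
  exact Nat.mul_le_mul_right _ this

-- An interval of `ℕ` is a pair `p`, standing for `{p.1, …, p.2}`.

def len (p : ℕ × ℕ) : ℕ := p.2 + 1 - p.1

def Nested (q p : ℕ × ℕ) : Prop := p.1 ≤ q.1 ∧ q.2 ≤ p.2

def InInterval (k : ℕ) (p : ℕ × ℕ) : Prop := p.1 ≤ k ∧ k ≤ p.2

theorem len_lt_len {q p : ℕ × ℕ} (hq : q.1 ≤ q.2) (h : Nested q p) (hne : q ≠ p) :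
    len q < len p := by
  obtain ⟨h1, h2⟩ := h
  have : q.1 ≠ p.1 ∨ q.2 ≠ p.2 := by
    by_contra! h
    exact hne (Prod.ext h.1 h.2)
  unfold len
  omega

/-- A tubing of the path graph on `{0, …, M}` (tubes are intervals, any two nested or disjoint and
non-adjacent) that contains the whole path. -/
structure IsTubing (M : ℕ) (T : Finset (ℕ × ℕ)) : Prop where
  le : ∀ p ∈ T, p.1 ≤ p.2
  le_bound : ∀ p ∈ T, p.2 ≤ M
  root_mem : (0, M) ∈ T
  compat : ∀ p ∈ T, ∀ q ∈ T, Nested p q ∨ Nested q p ∨ p.2 + 1 < q.1 ∨ q.2 + 1 < p.1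

open scoped Classical

def IsFree (T : Finset (ℕ × ℕ)) (p : ℕ × ℕ) (k : ℕ) : Prop :=
  InInterval k p ∧ ∀ q ∈ T, q ≠ p → Nested q p → ¬ InInterval k q

noncomputable def freeSet (T : Finset (ℕ × ℕ)) (p : ℕ × ℕ) : Finset ℕ :=
  (Icc p.1 p.2).filter (IsFree T p)

noncomputable def children (T : Finset (ℕ × ℕ)) (p : ℕ × ℕ) : Finset (ℕ × ℕ) :=
  T.filter fun C => C ≠ p ∧ Nested C p ∧ ∀ C' ∈ T, C' ≠ p → Nested C' p → Nested C C' → C' = C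

noncomputable def excess (T : Finset (ℕ × ℕ)) (p : ℕ × ℕ) : ℝ :=
  3 ^ len p - ∑ C ∈ children T p, (3 : ℝ) ^ len C

noncomputable def innerPoint (T : Finset (ℕ × ℕ)) (k : ℕ) : ℝ :=
  ∑ p ∈ T.filter (fun p => IsFree T p k), excess T p / #(freeSet T p)

theorem mem_children {T : Finset (ℕ × ℕ)} {p C : ℕ × ℕ} (hC : C ∈ children T p) :
    C ∈ T ∧ C ≠ p ∧ Nested C p := by
  rw [children, mem_filter] at hC
  exact ⟨hC.1, hC.2.1, hC.2.2.1⟩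

namespace IsTubing

variable {M : ℕ} {T : Finset (ℕ × ℕ)}

theorem one_le_len (hT : IsTubing M T) {p : ℕ × ℕ} (hp : p ∈ T) : 1 ≤ len p := by
  have := hT.le p hp
  unfold len
  omega

theorem nested_or_nested (hT : IsTubing M T) {p q : ℕ × ℕ} (hp : p ∈ T) (hq : q ∈ T)
    (h1 : q.1 ≤ p.2) (h2 : p.1 ≤ q.2) : Nested p q ∨ Nested q p := by
  rcases hT.compat p hp q hq with h | h | h | h
  · exact Or.inl h
  · exact Or.inr h
  · omega
  · omega

theorem eq_of_isFree (hT : IsTubing M T) {p q : ℕ × ℕ} {k : ℕ} (hp : p ∈ T) (hq : q ∈ T)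
    (hpk : IsFree T p k) (hqk : IsFree T q k) : p = q := by
  by_contra hne
  obtain ⟨⟨a1, a2⟩, _⟩ := id hpk
  obtain ⟨⟨b1, b2⟩, _⟩ := id hqk
  rcases hT.nested_or_nested hp hq (by omega) (by omega) with h | h
  · exact hqk.2 p hp hne h hpk.1
  · exact hpk.2 q hq (Ne.symm hne) h hqk.1

theorem isFree_iff_nested (hT : IsTubing M T) {p q : ℕ × ℕ} {k : ℕ} (hp : p ∈ T) (hq : q ∈ T)
    (hk : IsFree T q k) : InInterval k p ↔ Nested q p := by
  obtain ⟨⟨w1, w2⟩, hfree⟩ := hk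
  constructor
  · rintro ⟨v1, v2⟩
    rcases hT.nested_or_nested hp hq (by omega) (by omega) with h | h
    · by_cases hpq : p = q
      · exact hpq ▸ ⟨le_rfl, le_rfl⟩
      · exact absurd ⟨v1, v2⟩ (hfree p hp hpq h)
    · exact h
  · rintro ⟨x1, x2⟩
    exact ⟨by omega, by omega⟩

/-- Walking right from `I.1` past the maximal sub-tubes that contain it lands on a free point. -/
theorem exists_isFree (hT : IsTubing M T) {p I : ℕ × ℕ} (hI : I.1 ≤ I.2) (hIp : Nested I p)
    (hmax : ∀ C ∈ T, C ≠ p → Nested C p → ¬ Nested I C) :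
    ∃ k, InInterval k I ∧ IsFree T p k := by
  obtain ⟨hp1, hp2⟩ := hIp
  set S := T.filter (fun C => C ≠ p ∧ Nested C p ∧ InInterval I.1 C)
  rcases S.eq_empty_or_nonempty with hS | hS
  · refine ⟨I.1, ⟨le_rfl, hI⟩, ⟨by omega, by omega⟩, fun C hC hne hCp hmem => ?_⟩
    exact (Finset.eq_empty_iff_forall_notMem.1 hS) C (mem_filter.2 ⟨hC, hne, hCp, hmem⟩)
  obtain ⟨C, hC, hCmax⟩ := S.exists_max_image (fun C => C.2) hS
  obtain ⟨hCT, hCne, ⟨hs1, hs2⟩, ⟨hm1, hm2⟩⟩ := mem_filter.1 hC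
  have hCI : C.2 < I.2 := by
    by_contra h
    exact hmax C hCT hCne ⟨hs1, hs2⟩ ⟨hm1, by omega⟩
  refine ⟨C.2 + 1, ⟨by omega, by omega⟩, ⟨by omega, by omega⟩, ?_⟩
  rintro C' hC' hne' hsub' ⟨y1, y2⟩
  rcases hT.compat C' hC' C hCT with ⟨x1, x2⟩ | ⟨x1, x2⟩ | h | h
  · omega
  · have := hCmax C' (mem_filter.2 ⟨hC', hne', hsub', ⟨by omega, by omega⟩⟩)
    omega
  · omega
  · omega

theorem freeSet_nonempty (hT : IsTubing M T) {p : ℕ × ℕ} (hp : p ∈ T) :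
    (freeSet T p).Nonempty := by
  obtain ⟨k, ⟨hk1, hk2⟩, hk⟩ := hT.exists_isFree (hT.le p hp) ⟨le_rfl, le_rfl⟩
    fun C _ hne ⟨h1, h2⟩ ⟨h3, h4⟩ => hne (Prod.ext (by omega) (by omega))
  exact ⟨k, mem_filter.2 ⟨mem_Icc.2 ⟨hk1, hk2⟩, hk⟩⟩

theorem exists_mem_children (hT : IsTubing M T) {p : ℕ × ℕ} {k : ℕ} (hk : InInterval k p)
    (hnf : ¬ IsFree T p k) : ∃ C ∈ children T p, InInterval k C := by
  simp only [IsFree, hk, true_and, not_forall, not_not] at hnf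
  obtain ⟨C₀, hC₀, hne₀, hsub₀, hk₀⟩ := hnf
  set S := T.filter (fun C => C ≠ p ∧ Nested C p ∧ InInterval k C)
  obtain ⟨C, hC, hCmax⟩ := S.exists_max_image len ⟨C₀, mem_filter.2 ⟨hC₀, hne₀, hsub₀, hk₀⟩⟩
  obtain ⟨hCT, hCne, hCsub, ⟨hk1, hk2⟩⟩ := mem_filter.1 hC
  refine ⟨C, mem_filter.2 ⟨hCT, hCne, hCsub, fun C' hC' hne' hsub' ⟨h1, h2⟩ => ?_⟩, hk1, hk2⟩
  have hlen := hCmax C' (mem_filter.2 ⟨hC', hne', hsub', ⟨by omega, by omega⟩⟩)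
  have := hT.le C hCT
  unfold len at hlen
  exact Prod.ext (by omega) (by omega)

theorem children_separated (hT : IsTubing M T) {p C D : ℕ × ℕ} (hC : C ∈ children T p)
    (hD : D ∈ children T p) (hne : C ≠ D) : C.2 + 1 < D.1 ∨ D.2 + 1 < C.1 := by
  rw [children, mem_filter] at hC hD
  obtain ⟨hCT, hCne, hCsub, hCmax⟩ := hC
  obtain ⟨hDT, hDne, hDsub, hDmax⟩ := hD
  rcases hT.compat C hCT D hDT with h | h | h | h
  · exact absurd (hCmax D hDT hDne hDsub h).symm hne
  · exact absurd (hDmax C hCT hCne hCsub h) hne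
  · exact Or.inl h
  · exact Or.inr h

theorem sum_Icc_eq {β : Type*} [AddCommMonoid β] (hT : IsTubing M T) (g : ℕ → β)
    {p I : ℕ × ℕ} (hIp : Nested I p) :
    ∑ k ∈ Icc I.1 I.2, g k = ∑ k ∈ (Icc I.1 I.2).filter (IsFree T p), g k
      + ∑ C ∈ (children T p).filter (fun C => C.1 ≤ I.2 ∧ I.1 ≤ C.2),
          ∑ k ∈ Icc (max I.1 C.1) (min I.2 C.2), g k := by
  rw [← sum_filter_add_sum_filter_not (Icc I.1 I.2) (IsFree T p) g, ← sum_biUnion ?disj]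
  case disj =>
    intro C hC D hD hne
    simp only [coe_filter, Set.mem_ofPred_eq] at hC hD
    have := hT.children_separated hC.1 hD.1 hne
    simp only [Finset.disjoint_left, mem_Icc]
    omega
  congr 2
  ext k
  simp only [mem_filter, mem_Icc, mem_biUnion]
  constructor
  · rintro ⟨⟨hk1, hk2⟩, hnf⟩
    obtain ⟨C, hC, hm1, hm2⟩ :=
      hT.exists_mem_children ⟨le_trans hIp.1 hk1, le_trans hk2 hIp.2⟩ hnf
    exact ⟨C, ⟨hC, by omega, by omega⟩, by omega, by omega⟩
  · rintro ⟨C, ⟨hC, -, -⟩, hk1, hk2⟩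
    obtain ⟨hCT, hCne, hCsub⟩ := mem_children hC
    exact ⟨⟨by omega, by omega⟩, fun hf => hf.2 C hCT hCne hCsub ⟨by omega, by omega⟩⟩

theorem sum_Icc_self_eq {β : Type*} [AddCommMonoid β] (hT : IsTubing M T) (g : ℕ → β)
    {p : ℕ × ℕ} :
    ∑ k ∈ Icc p.1 p.2, g k = ∑ k ∈ freeSet T p, g k
      + ∑ C ∈ children T p, ∑ k ∈ Icc C.1 C.2, g k := by
  have hmeets : (children T p).filter (fun C => C.1 ≤ p.2 ∧ p.1 ≤ C.2) = children T p :=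
    filter_true_of_mem fun C hC => by
      obtain ⟨hCT, -, h1, h2⟩ := mem_children hC
      have := hT.le C hCT
      omega
  rw [hT.sum_Icc_eq g ⟨le_rfl, le_rfl⟩, hmeets, freeSet]
  refine congrArg _ (sum_congr rfl fun C hC => ?_)
  obtain ⟨-, -, h1, h2⟩ := mem_children hC
  rw [max_eq_right h1, min_eq_right h2]

theorem innerPoint_eq (hT : IsTubing M T) {p : ℕ × ℕ} {k : ℕ} (hp : p ∈ T)
    (hk : IsFree T p k) : innerPoint T k = excess T p / #(freeSet T p) := by
  rw [innerPoint, show T.filter (fun q => IsFree T q k) = {p} from ?_, sum_singleton]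
  ext q
  simp only [mem_filter, mem_singleton]
  exact ⟨fun ⟨hq, hqk⟩ => hT.eq_of_isFree hq hp hqk hk, fun h => h ▸ ⟨hp, hk⟩⟩

theorem sum_innerPoint_filter_isFree (hT : IsTubing M T) {p : ℕ × ℕ} (hp : p ∈ T)
    (S : Finset ℕ) :
    ∑ k ∈ S.filter (IsFree T p), innerPoint T k
      = #(S.filter (IsFree T p)) * (excess T p / #(freeSet T p)) := by
  rw [sum_congr rfl fun k hk => hT.innerPoint_eq hp (mem_filter.1 hk).2, sum_const,
    nsmul_eq_mul]

theorem sum_innerPoint_freeSet (hT : IsTubing M T) {p : ℕ × ℕ} (hp : p ∈ T) :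
    ∑ k ∈ freeSet T p, innerPoint T k = excess T p := by
  have hs : (#(freeSet T p) : ℝ) ≠ 0 := by
    exact_mod_cast (card_pos.2 (hT.freeSet_nonempty hp)).ne'
  rw [freeSet, hT.sum_innerPoint_filter_isFree hp, ← freeSet]
  field_simp

theorem sum_innerPoint_of_mem (hT : IsTubing M T) {p : ℕ × ℕ} (hp : p ∈ T) :
    ∑ k ∈ Icc p.1 p.2, innerPoint T k = 3 ^ len p := by
  induction hL : len p using Nat.strong_induction_on generalizing p with
  | _ L ih =>
  have hC : ∀ C ∈ children T p, ∑ k ∈ Icc C.1 C.2, innerPoint T k = 3 ^ len C := fun C hC =>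
    have ⟨hCT, hne, hCp⟩ := mem_children hC
    ih _ (hL ▸ len_lt_len (hT.le C hCT) hCp hne) hCT rfl
  rw [hT.sum_Icc_self_eq, hT.sum_innerPoint_freeSet hp, sum_congr rfl hC, excess, hL]
  ring

theorem len_eq (hT : IsTubing M T) (p : ℕ × ℕ) :
    len p = #(freeSet T p) + ∑ C ∈ children T p, len C := by
  have h := hT.sum_Icc_self_eq (fun _ => 1) (p := p)
  simp only [sum_const, smul_eq_mul, mul_one, Nat.card_Icc] at h
  exact h

theorem three_pow_sub_le_excess (hT : IsTubing M T) (p : ℕ × ℕ) :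
    (3 : ℝ) ^ len p - 3 ^ ∑ C ∈ children T p, len C ≤ excess T p :=
  sub_le_sub_left (sum_three_pow_le len fun _ hC => hT.one_le_len (mem_children hC).1) _

theorem two_mul_three_pow_le_excess (hT : IsTubing M T) {p : ℕ × ℕ} (hp : p ∈ T) :
    2 * (3 : ℝ) ^ (len p - 1) ≤ excess T p := by
  have hs := card_pos.2 (hT.freeSet_nonempty hp)
  have hlen := hT.len_eq p
  have hexc := hT.three_pow_sub_le_excess p
  have hle : (3 : ℝ) ^ ∑ C ∈ children T p, len C ≤ 3 ^ (len p - 1) :=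
    pow_le_pow_right₀ (by norm_num) (by omega)
  have h3 : (3 : ℝ) ^ len p = 3 * 3 ^ (len p - 1) := by
    rw [← pow_succ']
    congr 1
    omega
  linarith

theorem three_pow_card_freeSet_lt_excess (hT : IsTubing M T) {p : ℕ × ℕ} (hp : p ∈ T)
    (hch : (children T p).Nonempty) : (3 : ℝ) ^ #(freeSet T p) < excess T p := by
  set s := #(freeSet T p)
  set c := ∑ C ∈ children T p, len C
  have hs : 1 ≤ s := card_pos.2 (hT.freeSet_nonempty hp)
  have hc : 1 ≤ c := by
    obtain ⟨C, hC⟩ := hch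
    exact (hT.one_le_len (mem_children hC).1).trans
      (single_le_sum (fun i _ => Nat.zero_le (len i)) hC)
  have hexc := hT.three_pow_sub_le_excess p
  have h3s : (3 : ℝ) ≤ 3 ^ s := le_self_pow₀ (by norm_num) (by omega)
  have h3c : (3 : ℝ) ≤ 3 ^ c := le_self_pow₀ (by norm_num) (by omega)
  rw [hT.len_eq p, pow_add] at hexc
  nlinarith

theorem three_pow_le_mul_excess_div (hT : IsTubing M T) {p : ℕ × ℕ} (hp : p ∈ T) {f m : ℕ}
    (hf : 1 ≤ f) (hm : m < len p) (hs : #(freeSet T p) + m ≤ len p + f) :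
    (3 : ℝ) ^ m ≤ f * excess T p / #(freeSet T p) := by
  have hs0 : (0 : ℝ) < #(freeSet T p) := by exact_mod_cast card_pos.2 (hT.freeSet_nonempty hp)
  have hnum : (#(freeSet T p) : ℝ) * 3 ^ m ≤ 2 * f * 3 ^ (len p - 1) := by
    exact_mod_cast mul_three_pow_le_two_mul hf hm hs
  have hexc := hT.two_mul_three_pow_le_excess hp
  rw [le_div_iff₀ hs0]
  nlinarith

theorem three_pow_lt_mul_excess_div (hT : IsTubing M T) {p : ℕ × ℕ} (hp : p ∈ T) {f : ℕ}
    (hf : 1 ≤ f) (hfs : f ≤ #(freeSet T p)) (h : f < #(freeSet T p) ∨ (children T p).Nonempty) :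
    (3 : ℝ) ^ f < f * excess T p / #(freeSet T p) := by
  set s := #(freeSet T p)
  have hs0 : (0 : ℝ) < s := by exact_mod_cast card_pos.2 (hT.freeSet_nonempty hp)
  rw [lt_div_iff₀ hs0]
  rcases (children T p).eq_empty_or_nonempty with hch | hch
  · have hexc : excess T p = 3 ^ s := by
      rw [excess, hT.len_eq p, hch, sum_empty, sum_empty, sub_zero, add_zero]
    rw [hexc, mul_comm]
    exact_mod_cast mul_three_pow_lt hf (h.resolve_right (by simp [hch]))
  · have h1 : (s : ℝ) * 3 ^ f ≤ f * 3 ^ s := by exact_mod_cast mul_three_pow_le hf hfs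
    have h2 := hT.three_pow_card_freeSet_lt_excess hp hch
    have h3 : (1 : ℝ) ≤ f := by exact_mod_cast hf
    nlinarith

/-- If `I` meets a child of `p`, the free points of `p` in `I` already carry `3 ^ len I` and the
child adds a positive amount; otherwise `I` consists of free points of `p` only, and the estimate
is that `3 ^ x / x` increases. -/
theorem three_pow_lt_sum_innerPoint (hT : IsTubing M T) {p I : ℕ × ℕ} (hp : p ∈ T)
    (hI : I.1 ≤ I.2) (hIp : Nested I p) (hne : I ≠ p)
    (hmax : ∀ C ∈ T, C ≠ p → Nested C p → ¬ Nested I C)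
    (hblock : ∀ C ∈ children T p, ∀ J, Nested J C → J.1 ≤ J.2 →
      (3 : ℝ) ^ len J ≤ ∑ k ∈ Icc J.1 J.2, innerPoint T k) :
    (3 : ℝ) ^ len I < ∑ k ∈ Icc I.1 I.2, innerPoint T k := by
  rw [hT.sum_Icc_eq _ hIp, hT.sum_innerPoint_filter_isFree hp, mul_div_assoc']
  set F := (Icc I.1 I.2).filter (IsFree T p)
  set B := (children T p).filter fun C => C.1 ≤ I.2 ∧ I.1 ≤ C.2
  have hf : 1 ≤ #F := by
    obtain ⟨k, hkI, hk⟩ := hT.exists_isFree hI hIp hmax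
    exact card_pos.2 ⟨k, mem_filter.2 ⟨mem_Icc.2 hkI, hk⟩⟩
  have hlenI : len I = #F + ∑ C ∈ B, len (max I.1 C.1, min I.2 C.2) := by
    have h := hT.sum_Icc_eq (fun _ => 1) hIp
    simp only [sum_const, smul_eq_mul, mul_one, Nat.card_Icc] at h
    exact h
  have hlenp := hT.len_eq p
  have hlt : len I < len p := len_lt_len hI hIp hne
  rcases B.eq_empty_or_nonempty with hB | hB
  · rw [hB, sum_empty, add_zero] at hlenI ⊢
    rw [hlenI]
    refine hT.three_pow_lt_mul_excess_div hp hf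
      (card_le_card (filter_subset_filter _ (Icc_subset_Icc hIp.1 hIp.2))) ?_
    rcases (children T p).eq_empty_or_nonempty with hch | hch
    · rw [hch, sum_empty] at hlenp
      omega
    · exact Or.inr hch
  · have hblocks : 0 < ∑ C ∈ B, ∑ k ∈ Icc (max I.1 C.1) (min I.2 C.2), innerPoint T k := by
      refine sum_pos (fun C hC => ?_) hB
      obtain ⟨hCch, h1, h2⟩ := mem_filter.1 hC
      have := hT.le C (mem_children hCch).1
      exact lt_of_lt_of_le (pow_pos (by norm_num) _) (hblock C hCch (max I.1 C.1, min I.2 C.2)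
        ⟨le_max_right _ _, min_le_right _ _⟩ (show max I.1 C.1 ≤ min I.2 C.2 by omega))
    have hBc : ∑ C ∈ B, len (max I.1 C.1, min I.2 C.2) ≤ ∑ C ∈ children T p, len C :=
      (sum_le_sum fun C _ => by unfold len; omega).trans (sum_le_sum_of_subset (filter_subset _ _))
    linarith [hT.three_pow_le_mul_excess_div hp hf hlt (by omega)]

theorem three_pow_lt_sum_innerPoint_of_nested (hT : IsTubing M T) {p : ℕ × ℕ} (hp : p ∈ T)
    {I : ℕ × ℕ} (hI : I.1 ≤ I.2) (hIp : Nested I p) (hIT : I ∉ T) :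
    (3 : ℝ) ^ len I < ∑ k ∈ Icc I.1 I.2, innerPoint T k := by
  induction hL : len p using Nat.strong_induction_on generalizing p I with
  | _ L ih =>
  by_cases hsub : ∃ C ∈ T, C ≠ p ∧ Nested C p ∧ Nested I C
  · obtain ⟨C, hC, hne, hCp, hIC⟩ := hsub
    exact ih _ (hL ▸ len_lt_len (hT.le C hC) hCp hne) hC hI hIC hIT rfl
  push Not at hsub
  refine hT.three_pow_lt_sum_innerPoint hp hI hIp (fun h => hIT (h ▸ hp)) hsub
    fun C hC J hJC hJ => ?_
  by_cases hJT : J ∈ T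
  · exact (hT.sum_innerPoint_of_mem hJT).ge
  · obtain ⟨hCT, hne, hCp⟩ := mem_children hC
    exact (ih _ (hL ▸ len_lt_len (hT.le C hCT) hCp hne) hCT hJ hJC hJT rfl).le

theorem three_pow_lt_sum_innerPoint_of_notMem (hT : IsTubing M T) {I : ℕ × ℕ}
    (hI : I.1 ≤ I.2) (hIM : I.2 ≤ M) (hIT : I ∉ T) :
    (3 : ℝ) ^ len I < ∑ k ∈ Icc I.1 I.2, innerPoint T k :=
  hT.three_pow_lt_sum_innerPoint_of_nested hT.root_mem hI ⟨Nat.zero_le _, hIM⟩ hIT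

end IsTubing

theorem sum_Icc_add_sum_Icc (t : ℕ → ℝ) {a b c d : ℕ} (hac : a ≤ c) (hcb : c ≤ b + 1)
    (hbd : b ≤ d) :
    ∑ k ∈ Icc a d, t k + ∑ k ∈ Icc c b, t k = ∑ k ∈ Icc a b, t k + ∑ k ∈ Icc c d, t k := by
  rw [← sum_union_inter (s₁ := Icc a b) (s₂ := Icc c d)]
  congr 2 <;> ext k <;> simp only [mem_union, mem_inter, mem_Icc] <;> omega

/-- Interval sums are modular (`sum_Icc_add_sum_Icc`), whereas `3 ^ len` of the union of two
crossing intervals exceeds the sum of those of the two intervals. -/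
theorem not_tight_of_cross (t : ℕ → ℝ) {M : ℕ}
    (hge : ∀ I : ℕ × ℕ, I.1 ≤ I.2 → I.2 ≤ M → (3 : ℝ) ^ len I ≤ ∑ k ∈ Icc I.1 I.2, t k)
    {I J : ℕ × ℕ} (h1 : I.1 < J.1) (h2 : J.1 ≤ I.2 + 1) (h3 : I.2 < J.2) (hJM : J.2 ≤ M)
    (hI : ∑ k ∈ Icc I.1 I.2, t k = 3 ^ len I) (hJ : ∑ k ∈ Icc J.1 J.2, t k = 3 ^ len J) :
    False := by
  have hmod := sum_Icc_add_sum_Icc t h1.le h2 h3.le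
  have hunion := hge (I.1, J.2) (by simp only; omega) hJM
  have hinter : 0 ≤ ∑ k ∈ Icc J.1 I.2, t k := by
    rcases le_or_gt J.1 I.2 with h | h
    · exact le_trans (by positivity) (hge (J.1, I.2) h (by simp only; omega))
    · rw [Icc_eq_empty_of_lt h, sum_empty]
  have hX : (0 : ℝ) < 3 ^ (J.2 - I.1) := by positivity
  have hIle : (3 : ℝ) ^ len I ≤ 3 ^ (J.2 - I.1) :=
    pow_le_pow_right₀ (by norm_num) (by unfold len; omega)
  have hJle : (3 : ℝ) ^ len J ≤ 3 ^ (J.2 - I.1) :=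
    pow_le_pow_right₀ (by norm_num) (by unfold len; omega)
  have hsucc : (3 : ℝ) ^ len (I.1, J.2) = 3 * 3 ^ (J.2 - I.1) := by
    rw [← pow_succ']
    congr 1
    unfold len
    omega
  linarith

theorem compat_of_tight (t : ℕ → ℝ) {M : ℕ}
    (hge : ∀ I : ℕ × ℕ, I.1 ≤ I.2 → I.2 ≤ M → (3 : ℝ) ^ len I ≤ ∑ k ∈ Icc I.1 I.2, t k)
    {I J : ℕ × ℕ} (hIM : I.2 ≤ M) (hJM : J.2 ≤ M)
    (htI : ∑ k ∈ Icc I.1 I.2, t k = 3 ^ len I) (htJ : ∑ k ∈ Icc J.1 J.2, t k = 3 ^ len J) :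
    Nested I J ∨ Nested J I ∨ I.2 + 1 < J.1 ∨ J.2 + 1 < I.1 := by
  unfold Nested
  by_contra! h
  rcases lt_trichotomy I.1 J.1 with hlt | heq | hgt
  · exact not_tight_of_cross t hge hlt (by omega) (by omega) hJM htI htJ
  · omega
  · exact not_tight_of_cross t hge hgt (by omega) (by omega) hIM htJ htI

noncomputable def intervalSums (m : ℕ) (T : Finset (ℕ × ℕ)) : (Fin m → ℝ) →ₗ[ℝ] (T → ℝ) :=
  (LinearMap.pi fun J : T => ∑ k ∈ Icc J.1.1 J.1.2, LinearMap.proj k) ∘ₗ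
    Function.ExtendByZero.linearMap ℝ Fin.val

theorem intervalSums_apply {m : ℕ} {T : Finset (ℕ × ℕ)} (t : Fin m → ℝ) (J : T) :
    intervalSums m T t J = ∑ k ∈ Icc J.1.1 J.1.2, Function.extend Fin.val t 0 k := by
  simp [intervalSums]

theorem extend_val_single {m : ℕ} (i : Fin m) :
    Function.extend Fin.val (Pi.single i (1 : ℝ)) 0 = Pi.single (i : ℕ) 1 := by
  funext k
  by_cases hk : k < m
  · rw [show k = ((⟨k, hk⟩ : Fin m) : ℕ) from rfl, Fin.val_injective.extend_apply]
    simp [Pi.single_apply, Fin.ext_iff]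
  · rw [Function.extend_apply' _ _ _ fun ⟨j, hj⟩ => hk (hj ▸ j.isLt)]
    simp only [Pi.zero_apply, Pi.single_apply, right_eq_ite_iff, zero_ne_one, imp_false]
    omega

theorem intervalSums_single {m : ℕ} {T : Finset (ℕ × ℕ)} (i : Fin m) (J : T) :
    intervalSums m T (Pi.single i 1) J = if InInterval i J then 1 else 0 := by
  simp only [intervalSums_apply, extend_val_single, sum_pi_single', InInterval, mem_Icc]
  congr

/-- The indicator is the image of the basis vector at a free point of `J`. -/
theorem IsTubing.indicator_nested_mem_range {M m : ℕ} {T : Finset (ℕ × ℕ)} (hT : IsTubing M T)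
    (hM : M < m) (J : T) :
    (fun J' : T => if Nested J J' then (1 : ℝ) else 0) ∈ LinearMap.range (intervalSums m T) := by
  obtain ⟨k, hk⟩ := hT.freeSet_nonempty J.2
  have hfree : IsFree T J k := (mem_filter.1 hk).2
  have hkm : k < m := by
    have := hfree.1.2
    have := hT.le_bound J J.2
    omega
  refine ⟨Pi.single ⟨k, hkm⟩ 1, funext fun J' => ?_⟩
  rw [intervalSums_single]
  exact if_congr (hT.isFree_iff_nested J'.2 J.2 hfree) rfl rfl

/-- Downward induction on `J`: subtracting the basis vectors of the larger tubes from the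
indicator of the tubes containing `J` leaves the basis vector of `J`. -/
theorem IsTubing.surjective_intervalSums {M m : ℕ} {T : Finset (ℕ × ℕ)} (hT : IsTubing M T)
    (hM : M < m) : Function.Surjective (intervalSums m T) := by
  have hsingle : ∀ J : T, Pi.single J (1 : ℝ) ∈ LinearMap.range (intervalSums m T) := by
    intro J
    induction hd : M + 1 - len J using Nat.strong_induction_on generalizing J with
    | _ d ih =>
    have hJ : Pi.single J (1 : ℝ) = (fun J' : T => if Nested J J' then (1 : ℝ) else 0)
        - ∑ J' ∈ univ.filter (fun J' : T => J' ≠ J ∧ Nested J J'), Pi.single J' 1 := by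
      funext J''
      simp only [Pi.sub_apply, Finset.sum_apply, Pi.single_apply, sum_ite_eq, mem_filter,
        mem_univ, true_and]
      by_cases h : J'' = J
      · subst h
        simp [Nested]
      · simp [h]
    rw [hJ]
    refine sub_mem (hT.indicator_nested_mem_range hM J) (sum_mem fun J' hJ' => ?_)
    obtain ⟨hne, hnest⟩ := (mem_filter.1 hJ').2
    have hlt := len_lt_len (hT.le J J.2) hnest (fun h => hne (Subtype.ext h).symm)
    have hle : len J' ≤ M + 1 := by
      have := hT.le_bound J' J'.2
      unfold len
      omega
    exact ih _ (by omega) J' rfl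
  rw [← LinearMap.range_eq_top, eq_top_iff, ← (Pi.basisFun ℝ T).span_eq, Submodule.span_le]
  rintro _ ⟨J, rfl⟩
  simpa using hsingle J

end Associahedron

section ConvexFacts

variable {E ι : Type*} [AddCommGroup E] [Module ℝ E]

theorem isExposed_setOf_forall_eq [TopologicalSpace E] {A : Set E} (s : Finset ι)
    (l : ι → StrongDual ℝ E) (c : ι → ℝ) (hle : ∀ x ∈ A, ∀ i ∈ s, c i ≤ l i x) :
    IsExposed ℝ A {x ∈ A | ∀ i ∈ s, l i x = c i} := by
  rintro ⟨x₀, hx₀A, hx₀⟩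
  refine ⟨-∑ i ∈ s, l i, Set.ext fun x => ⟨fun ⟨hxA, hx⟩ => ⟨hxA, fun y hy => ?_⟩,
    fun ⟨hxA, hmax⟩ => ⟨hxA, ?_⟩⟩⟩
  · simp only [neg_apply, _root_.sum_apply, neg_le_neg_iff]
    rw [sum_congr rfl hx]
    exact sum_le_sum (hle y hy)
  · have h := hmax x₀ hx₀A
    simp only [neg_apply, _root_.sum_apply, neg_le_neg_iff] at h
    rw [sum_congr rfl hx₀] at h
    exact fun i hi => ((sum_eq_sum_iff_of_le (hle x hxA)).1
      (le_antisymm (sum_le_sum (hle x hxA)) h) i hi).symm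

theorem Convex.exists_forall_lt {F : Set E} (hF : Convex ℝ F) (hne : F.Nonempty) (s : Finset ι)
    (g : ι → E →ₗ[ℝ] ℝ) (c : ι → ℝ) (hle : ∀ x ∈ F, ∀ i ∈ s, c i ≤ g i x)
    (hlt : ∀ i ∈ s, ∃ x ∈ F, c i < g i x) : ∃ x ∈ F, ∀ i ∈ s, c i < g i x := by
  classical
  induction s using Finset.induction_on with
  | empty => exact ⟨hne.some, hne.some_mem, by simp⟩
  | insert j s _ ih =>
    obtain ⟨x, hxF, hx⟩ := ih (fun x hx i hi => hle x hx i (mem_insert_of_mem hi))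
      fun i hi => hlt i (mem_insert_of_mem hi)
    obtain ⟨y, hyF, hy⟩ := hlt j (mem_insert_self j s)
    refine ⟨(1 / 2 : ℝ) • x + (1 / 2 : ℝ) • y, hF hxF hyF (by norm_num) (by norm_num) (by norm_num),
      fun i hi => ?_⟩
    have hxi := hle x hxF i hi
    have hyi := hle y hyF i hi
    simp only [map_add, map_smul, smul_eq_mul]
    rcases mem_insert.1 hi with rfl | hi
    · linarith
    · linarith [hx i hi]

theorem exists_pos_forall_lt_add_smul (s : Finset ι) (g : ι → E →ₗ[ℝ] ℝ) (c : ι → ℝ) {x : E}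
    (hx : ∀ i ∈ s, c i < g i x) (v : E) : ∃ δ > (0 : ℝ), ∀ i ∈ s, c i < g i (x + δ • v) := by
  have hnear : ∀ i ∈ s, ∀ᶠ δ in 𝓝 (0 : ℝ), c i < g i (x + δ • v) := fun i hi => by
    have hcont : Continuous fun δ : ℝ => g i (x + δ • v) := by
      simp only [map_add, map_smul, smul_eq_mul]
      fun_prop
    exact hcont.continuousAt.eventually_const_lt (by simpa using hx i hi)
  obtain ⟨δ, hδ, hδpos⟩ := ((((eventually_all_finset s).2 hnear).filter_mono
    nhdsWithin_le_nhds).and (self_mem_nhdsWithin : Set.Ioi 0 ∈ 𝓝[>] (0 : ℝ))).exists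
  exact ⟨δ, hδpos, hδ⟩

end ConvexFacts

namespace KnPoly

open Associahedron

variable {n : ℕ} {ι : Finset (Fin (n - 1) × Fin (n - 1))}

theorem convex (n : ℕ) : Convex ℝ (KnPoly n) := by
  intro x hx y hy a b ha hb hab
  simp only [KnPoly, Set.mem_ofPred_eq, Pi.add_apply, Pi.smul_apply, smul_eq_mul, sum_add_distrib,
    ← mul_sum] at hx hy ⊢
  refine ⟨by rw [hx.1, hy.1, ← add_mul, hab, one_mul], fun i j hij hpr => ?_⟩
  have hx' := mul_le_mul_of_nonneg_left (hx.2 i j hij hpr) ha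
  have hy' := mul_le_mul_of_nonneg_left (hy.2 i j hij hpr) hb
  calc (3 : ℝ) ^ #(Icc i j) = a * 3 ^ #(Icc i j) + b * 3 ^ #(Icc i j) := by
        rw [← add_mul, hab, one_mul]
    _ ≤ _ := add_le_add hx' hy'

theorem sum_Icc_fin {β : Type*} [AddCommMonoid β] {m : ℕ} (g : ℕ → β) (i j : Fin m) :
    ∑ k ∈ Icc i j, g k = ∑ k ∈ Icc (i : ℕ) j, g k := by
  rw [← Fin.map_valEmbedding_Icc, sum_map]
  rfl

theorem sum_Icc_extend {m : ℕ} (t : Fin m → ℝ) (i j : Fin m) :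
    ∑ k ∈ Icc (i : ℕ) j, Function.extend Fin.val t 0 k = ∑ k ∈ Icc i j, t k := by
  rw [← sum_Icc_fin]
  exact sum_congr rfl fun k _ => Fin.val_injective.extend_apply t 0 k

theorem sum_Icc_zero_extend (hn : 2 ≤ n) (t : Fin (n - 1) → ℝ) :
    ∑ k ∈ Icc 0 (n - 2), Function.extend Fin.val t 0 k = ∑ k, t k := by
  have hrange : Icc 0 (n - 2) = range (n - 1) := by
    ext
    simp only [mem_Icc, zero_le, true_and, mem_range]
    omega
  rw [hrange, ← Fin.sum_univ_eq_sum_range]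
  exact sum_congr rfl fun k _ => Fin.val_injective.extend_apply t 0 k

/-- Coordinates `Fin (n - 1)` are read in `ℕ`; the whole interval `(0, n - 2)` carries the
equation `∑ t = 3 ^ (n - 1)` of `K_n`. -/
def tubing (n : ℕ) (ι : Finset (Fin (n - 1) × Fin (n - 1))) : Finset (ℕ × ℕ) :=
  insert (0, n - 2) (ι.image fun p => ((p.1 : ℕ), (p.2 : ℕ)))

theorem coe_mem_tubing {p : Fin (n - 1) × Fin (n - 1)} (hp : p ∈ ι) :
    ((p.1 : ℕ), (p.2 : ℕ)) ∈ tubing n ι :=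
  mem_insert_of_mem (mem_image_of_mem _ hp)

theorem root_mem_tubing : (0, n - 2) ∈ tubing n ι := mem_insert_self _ _

theorem coe_mem_tubing_iff {q : Fin (n - 1) × Fin (n - 1)} (hq : ProperInt n q) :
    ((q.1 : ℕ), (q.2 : ℕ)) ∈ tubing n ι ↔ q ∈ ι := by
  refine ⟨fun h => ?_, coe_mem_tubing⟩
  rcases mem_insert.1 h with h | h
  · exact absurd (Prod.mk.inj h) hq.2
  · obtain ⟨p, hp, hpq⟩ := mem_image.1 h
    obtain ⟨h1, h2⟩ := Prod.mk.inj hpq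
    rwa [← Prod.ext (Fin.ext h1) (Fin.ext h2)]

theorem card_tubing (hprop : ∀ p ∈ ι, ProperInt n p) : #(tubing n ι) = #ι + 1 := by
  rw [tubing, card_insert_of_notMem, card_image_of_injective]
  · intro p q h
    obtain ⟨h1, h2⟩ := Prod.mk.inj h
    exact Prod.ext (Fin.ext h1) (Fin.ext h2)
  · simp only [mem_image, Prod.mk.injEq, not_exists, not_and]
    exact fun p hp h1 h2 => (hprop p hp).2 ⟨h1, h2⟩

theorem isTubing_tubing (hprop : ∀ p ∈ ι, ProperInt n p)
    (hcomp : ∀ p ∈ ι, ∀ q ∈ ι, CompatInt n p q) : IsTubing (n - 2) (tubing n ι) where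
  le p hp := by
    rcases mem_insert.1 hp with rfl | hp
    · exact Nat.zero_le _
    · obtain ⟨q, hq, rfl⟩ := mem_image.1 hp
      exact (hprop q hq).1
  le_bound p hp := by
    rcases mem_insert.1 hp with rfl | hp
    · exact le_rfl
    · obtain ⟨q, hq, rfl⟩ := mem_image.1 hp
      have := q.2.isLt
      simp only
      omega
  root_mem := root_mem_tubing
  compat p hp q hq := by
    rcases mem_insert.1 hp with rfl | hp <;> rcases mem_insert.1 hq with rfl | hq
    · exact Or.inl ⟨le_rfl, le_rfl⟩
    · obtain ⟨q, -, rfl⟩ := mem_image.1 hq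
      have := q.2.isLt
      exact Or.inr (Or.inl ⟨Nat.zero_le _, by simp only; omega⟩)
    · obtain ⟨p, -, rfl⟩ := mem_image.1 hp
      have := p.2.isLt
      exact Or.inl ⟨Nat.zero_le _, by simp only; omega⟩
    · obtain ⟨p', hp', rfl⟩ := mem_image.1 hp
      obtain ⟨q', hq', rfl⟩ := mem_image.1 hq
      rcases hcomp p' hp' q' hq' with h | h | h | h
      · exact Or.inr (Or.inl h)
      · exact Or.inl h
      · exact Or.inr (Or.inr (Or.inl h))
      · exact Or.inr (Or.inr (Or.inr h))

theorem intervalSums_coe (t : Fin (n - 1) → ℝ) {p : Fin (n - 1) × Fin (n - 1)} (hp : p ∈ ι) :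
    intervalSums (n - 1) (tubing n ι) t ⟨_, coe_mem_tubing hp⟩ = ∑ k ∈ Icc p.1 p.2, t k := by
  rw [intervalSums_apply, sum_Icc_extend]

theorem intervalSums_root (hn : 2 ≤ n) (t : Fin (n - 1) → ℝ) :
    intervalSums (n - 1) (tubing n ι) t ⟨_, root_mem_tubing⟩ = ∑ k, t k := by
  rw [intervalSums_apply, sum_Icc_zero_extend hn]

theorem len_root (hn : 2 ≤ n) : len (0, n - 2) = n - 1 := by
  show n - 2 + 1 - 0 = n - 1
  omega

theorem mem_knFace_iff (hn : 2 ≤ n) {x : Fin (n - 1) → ℝ} :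
    x ∈ KnFace n ι ↔ intervalSums (n - 1) (tubing n ι) x = (fun J => 3 ^ len J.1) ∧
      ∀ q, ProperInt n q → q ∉ ι → (3 : ℝ) ^ #(Icc q.1 q.2) ≤ ∑ k ∈ Icc q.1 q.2, x k := by
  have hlen : ∀ p : Fin (n - 1) × Fin (n - 1), len ((p.1 : ℕ), (p.2 : ℕ)) = #(Icc p.1 p.2) :=
    fun p => (Fin.card_Icc _ _).symm
  constructor
  · rintro ⟨⟨hsum, hge⟩, htight⟩
    refine ⟨funext fun ⟨J, hJ⟩ => ?_, fun q hq _ => hge q.1 q.2 hq.1 hq.2⟩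
    show _ = (3 : ℝ) ^ len J
    rcases mem_insert.1 hJ with rfl | hJ
    · rw [intervalSums_root hn, hsum, len_root hn]
    · obtain ⟨p, hp, rfl⟩ := mem_image.1 hJ
      rw [intervalSums_coe x hp, htight p hp, hlen]
  · rintro ⟨hΦ, hge⟩
    have htight : ∀ p ∈ ι, ∑ k ∈ Icc p.1 p.2, x k = 3 ^ #(Icc p.1 p.2) := fun p hp => by
      rw [← intervalSums_coe x hp, congrFun hΦ _, hlen]
    refine ⟨⟨?_, fun i j hij hpr => ?_⟩, htight⟩
    · rw [← intervalSums_root hn, congrFun hΦ _, len_root hn]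
    · by_cases hmem : (i, j) ∈ ι
      · exact (htight _ hmem).ge
      · exact hge (i, j) ⟨hij, hpr⟩ hmem

noncomputable def centralPoint (n : ℕ) (ι : Finset (Fin (n - 1) × Fin (n - 1))) :
    Fin (n - 1) → ℝ :=
  fun k => innerPoint (tubing n ι) k

theorem intervalSums_centralPoint (hn : 2 ≤ n) (hprop : ∀ p ∈ ι, ProperInt n p)
    (hcomp : ∀ p ∈ ι, ∀ q ∈ ι, CompatInt n p q) :
    intervalSums (n - 1) (tubing n ι) (centralPoint n ι) = fun J => 3 ^ len J.1 := by
  have hT := isTubing_tubing hprop hcomp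
  funext J
  rw [intervalSums_apply, ← hT.sum_innerPoint_of_mem J.2]
  refine sum_congr rfl fun k hk => ?_
  have hk : k < n - 1 := by
    have := (mem_Icc.1 hk).2
    have := hT.le_bound J J.2
    omega
  exact Fin.val_injective.extend_apply (centralPoint n ι) 0 ⟨k, hk⟩

theorem three_pow_lt_sum_centralPoint (hprop : ∀ p ∈ ι, ProperInt n p)
    (hcomp : ∀ p ∈ ι, ∀ q ∈ ι, CompatInt n p q) {q : Fin (n - 1) × Fin (n - 1)}
    (hq : ProperInt n q) (hqι : q ∉ ι) :
    (3 : ℝ) ^ #(Icc q.1 q.2) < ∑ k ∈ Icc q.1 q.2, centralPoint n ι k := by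
  have := q.2.isLt
  unfold centralPoint
  rw [sum_Icc_fin (innerPoint (tubing n ι)), Fin.card_Icc]
  exact (isTubing_tubing hprop hcomp).three_pow_lt_sum_innerPoint_of_notMem (I := (q.1, q.2))
    hq.1 (by simp only; omega) ((coe_mem_tubing_iff hq).not.2 hqι)

theorem centralPoint_mem_knFace (hn : 2 ≤ n) (hprop : ∀ p ∈ ι, ProperInt n p)
    (hcomp : ∀ p ∈ ι, ∀ q ∈ ι, CompatInt n p q) : centralPoint n ι ∈ KnFace n ι :=
  (mem_knFace_iff hn).2 ⟨intervalSums_centralPoint hn hprop hcomp,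
    fun _ hq hqι => (three_pow_lt_sum_centralPoint hprop hcomp hq hqι).le⟩

noncomputable def intervalSum {m : ℕ} (i j : Fin m) : StrongDual ℝ (Fin m → ℝ) :=
  ∑ k ∈ Icc i j, ContinuousLinearMap.proj k

theorem intervalSum_apply {m : ℕ} (i j : Fin m) (t : Fin m → ℝ) :
    intervalSum i j t = ∑ k ∈ Icc i j, t k := by
  simp [intervalSum]

theorem exists_pos_add_smul_mem_knFace (hn : 2 ≤ n) {x : Fin (n - 1) → ℝ} (hx : x ∈ KnFace n ι)
    (hstrict : ∀ q, ProperInt n q → q ∉ ι → (3 : ℝ) ^ #(Icc q.1 q.2) < ∑ k ∈ Icc q.1 q.2, x k)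
    {v : Fin (n - 1) → ℝ} (hv : intervalSums (n - 1) (tubing n ι) v = 0) :
    ∃ δ > (0 : ℝ), x + δ • v ∈ KnFace n ι := by
  classical
  obtain ⟨δ, hδ, hlt⟩ := exists_pos_forall_lt_add_smul
    (univ.filter fun q => ProperInt n q ∧ q ∉ ι) (fun q => (intervalSum q.1 q.2 : _ →ₗ[ℝ] ℝ))
    (fun q => 3 ^ #(Icc q.1 q.2)) (x := x)
    (fun q hq => by
      obtain ⟨-, hq, hqι⟩ := mem_filter.1 hq
      simpa [intervalSum_apply] using hstrict q hq hqι) v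
  refine ⟨δ, hδ, (mem_knFace_iff hn).2 ⟨?_, fun q hq hqι => ?_⟩⟩
  · rw [map_add, map_smul, hv, smul_zero, add_zero, ((mem_knFace_iff hn).1 hx).1]
  · simpa [intervalSum_apply] using (hlt q (by simp [hq, hqι])).le

theorem isExposed_knFace (hprop : ∀ p ∈ ι, ProperInt n p) :
    IsExposed ℝ (KnPoly n) (KnFace n ι) := by
  have hface : KnFace n ι
      = {x ∈ KnPoly n | ∀ p ∈ ι, intervalSum p.1 p.2 x = 3 ^ #(Icc p.1 p.2)} := by
    simp only [intervalSum_apply]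
    rfl
  rw [hface]
  refine isExposed_setOf_forall_eq ι _ _ fun x hx p hp => ?_
  rw [intervalSum_apply]
  exact hx.2 p.1 p.2 (hprop p hp).1 (hprop p hp).2

theorem vectorSpan_knFace (hn : 2 ≤ n) (hprop : ∀ p ∈ ι, ProperInt n p)
    (hcomp : ∀ p ∈ ι, ∀ q ∈ ι, CompatInt n p q) :
    vectorSpan ℝ (KnFace n ι) = LinearMap.ker (intervalSums (n - 1) (tubing n ι)) := by
  refine le_antisymm ?_ fun d hd => ?_
  · rw [vectorSpan_def, Submodule.span_le]
    rintro _ ⟨x, hx, y, hy, rfl⟩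
    simp [((mem_knFace_iff hn).1 hx).1, ((mem_knFace_iff hn).1 hy).1]
  · have hc := centralPoint_mem_knFace hn hprop hcomp
    obtain ⟨δ, hδ, hmem⟩ := exists_pos_add_smul_mem_knFace hn hc
      (fun q hq hqι => three_pow_lt_sum_centralPoint hprop hcomp hq hqι) hd
    have h := Submodule.smul_mem _ δ⁻¹ (vsub_mem_vectorSpan ℝ hmem hc)
    rwa [vsub_eq_sub, add_sub_cancel_left, smul_smul, inv_mul_cancel₀ hδ.ne', one_smul] at h

theorem finrank_vectorSpan_knFace (hn : 2 ≤ n) (hprop : ∀ p ∈ ι, ProperInt n p)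
    (hcomp : ∀ p ∈ ι, ∀ q ∈ ι, CompatInt n p q) :
    Module.finrank ℝ (vectorSpan ℝ (KnFace n ι)) + #ι + 2 = n := by
  have hrank := LinearMap.finrank_range_add_finrank_ker (intervalSums (n - 1) (tubing n ι))
  rw [LinearMap.range_eq_top.2 ((isTubing_tubing hprop hcomp).surjective_intervalSums
    (by omega)), finrank_top, Module.finrank_fintype_fun_eq_card, Fintype.card_coe,
    card_tubing hprop, Module.finrank_fin_fun] at hrank
  rw [vectorSpan_knFace hn hprop hcomp]
  omega

theorem three_pow_le_sum_extend (hn : 2 ≤ n) {t : Fin (n - 1) → ℝ} (ht : t ∈ KnPoly n)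
    (I : ℕ × ℕ) (hI : I.1 ≤ I.2) (hIM : I.2 ≤ n - 2) :
    (3 : ℝ) ^ len I ≤ ∑ k ∈ Icc I.1 I.2, Function.extend Fin.val t 0 k := by
  by_cases hroot : I.1 = 0 ∧ I.2 = n - 2
  · rw [hroot.1, hroot.2, sum_Icc_zero_extend hn, ht.1, len, hroot.1, hroot.2]
    exact le_of_eq (by congr 1; omega)
  · have h := ht.2 ⟨I.1, by omega⟩ ⟨I.2, by omega⟩ (Fin.le_def.2 hI) hroot
    rwa [← sum_Icc_extend, Fin.card_Icc] at h

theorem compatInt_of_tight (hn : 2 ≤ n) {t : Fin (n - 1) → ℝ} (ht : t ∈ KnPoly n)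
    {p q : Fin (n - 1) × Fin (n - 1)}
    (htp : ∑ k ∈ Icc p.1 p.2, t k = 3 ^ #(Icc p.1 p.2))
    (htq : ∑ k ∈ Icc q.1 q.2, t k = 3 ^ #(Icc q.1 q.2)) : CompatInt n p q := by
  have := p.2.isLt
  have := q.2.isLt
  rw [← sum_Icc_extend, Fin.card_Icc] at htp htq
  rcases compat_of_tight _ (three_pow_le_sum_extend hn ht) (I := (q.1, q.2)) (J := (p.1, p.2))
    (by simp only; omega) (by simp only; omega) htq htp with h | h | h | h
  · exact Or.inl h
  · exact Or.inr (Or.inl h)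
  · exact Or.inr (Or.inr (Or.inr h))
  · exact Or.inr (Or.inr (Or.inl h))

theorem exists_mem_forall_three_pow_lt {F : Set (Fin (n - 1) → ℝ)} (hconv : Convex ℝ F)
    (hne : F.Nonempty) (hFK : F ⊆ KnPoly n) :
    ∃ x ∈ F, ∀ q, ProperInt n q → (∃ y ∈ F, ∑ k ∈ Icc q.1 q.2, y k ≠ 3 ^ #(Icc q.1 q.2)) →
      (3 : ℝ) ^ #(Icc q.1 q.2) < ∑ k ∈ Icc q.1 q.2, x k := by
  classical
  obtain ⟨x, hxF, hx⟩ := hconv.exists_forall_lt hne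
    (univ.filter fun q => ProperInt n q ∧ ∃ y ∈ F, ∑ k ∈ Icc q.1 q.2, y k ≠ 3 ^ #(Icc q.1 q.2))
    (fun q => (intervalSum q.1 q.2 : _ →ₗ[ℝ] ℝ)) (fun q => 3 ^ #(Icc q.1 q.2))
    (fun y hy q hq => by
      obtain ⟨-, hq, -⟩ := mem_filter.1 hq
      simpa [intervalSum_apply] using (hFK hy).2 q.1 q.2 hq.1 hq.2)
    fun q hq => by
      obtain ⟨-, hq, y, hyF, hy⟩ := mem_filter.1 hq
      exact ⟨y, hyF, by
        simpa [intervalSum_apply] using lt_of_le_of_ne ((hFK hyF).2 q.1 q.2 hq.1 hq.2) (Ne.symm hy)⟩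
  exact ⟨x, hxF, fun q hq hqF => by
    simpa [intervalSum_apply] using hx q (mem_filter.2 ⟨mem_univ q, hq, hqF⟩)⟩

/-- `x` can be pushed away from any `y` of the face, so `y` maximizes `l` as well. -/
theorem knFace_subset_of_isMaxOn (hn : 2 ≤ n) {l : StrongDual ℝ (Fin (n - 1) → ℝ)}
    {x : Fin (n - 1) → ℝ} (hx : x ∈ KnFace n ι) (hmax : IsMaxOn l (KnPoly n) x)
    (hstrict : ∀ q, ProperInt n q → q ∉ ι → (3 : ℝ) ^ #(Icc q.1 q.2) < ∑ k ∈ Icc q.1 q.2, x k) :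
    KnFace n ι ⊆ {z ∈ KnPoly n | ∀ y ∈ KnPoly n, l y ≤ l z} := by
  intro y hy
  have hΦ := fun z (hz : z ∈ KnFace n ι) => ((mem_knFace_iff hn).1 hz).1
  obtain ⟨δ, hδ, hmem⟩ := exists_pos_add_smul_mem_knFace hn hx hstrict
    (v := x - y) (by rw [map_sub, hΦ x hx, hΦ y hy, sub_self])
  have hpush := isMaxOn_iff.1 hmax _ hmem.1
  simp only [map_add, map_smul, map_sub, smul_eq_mul] at hpush
  have hxy : l x ≤ l y := by
    by_contra! h
    nlinarith [mul_pos hδ (sub_pos.2 h)]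
  exact ⟨hy.1, fun z hz => (isMaxOn_iff.1 hmax z hz).trans hxy⟩

theorem exists_eq_knFace_of_isExposed (hn : 2 ≤ n) {F : Set (Fin (n - 1) → ℝ)}
    (hF : IsExposed ℝ (KnPoly n) F) (hne : F.Nonempty) :
    ∃ ι : Finset (Fin (n - 1) × Fin (n - 1)), (∀ p ∈ ι, ProperInt n p) ∧
      (∀ p ∈ ι, ∀ q ∈ ι, CompatInt n p q) ∧ F = KnFace n ι := by
  classical
  obtain ⟨l, hl⟩ := hF hne
  have hFK : F ⊆ KnPoly n := hl ▸ Set.sep_subset _ _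
  set ι := univ.filter fun p => ProperInt n p ∧ ∀ t ∈ F, ∑ k ∈ Icc p.1 p.2, t k = 3 ^ #(Icc p.1 p.2)
  have htight : ∀ p ∈ ι, ∀ t ∈ F, ∑ k ∈ Icc p.1 p.2, t k = 3 ^ #(Icc p.1 p.2) :=
    fun p hp => (mem_filter.1 hp).2.2
  have hFι : F ⊆ KnFace n ι := fun t ht => ⟨hFK ht, fun p hp => htight p hp t ht⟩
  obtain ⟨x, hxF, hx⟩ := exists_mem_forall_three_pow_lt (hF.convex (convex n)) hne hFK
  refine ⟨ι, fun p hp => (mem_filter.1 hp).2.1,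
    fun p hp q hq => compatInt_of_tight hn (hFK hxF) (htight p hp x hxF) (htight q hq x hxF),
    hFι.antisymm ?_⟩
  have hxι := hFι hxF
  rw [hl] at hxF ⊢
  refine knFace_subset_of_isMaxOn hn hxι (isMaxOn_iff.2 hxF.2) fun q hq hqι => hx q hq ?_
  simpa [ι, hq] using hqι

end KnPoly

/-- for each set `ι` of pairwise compatible proper subintervals of `[1,n-1]`,
the intersection of `K_n` with the hyperplanes `P_I`, `I ∈ ι`, is a nonempty face of `K_n`
of dimension `n - #ι - 2`, and every (nonempty, exposed) face of `K_n` arises this way;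
consequently the face poset of `K_n` is isomorphic to the poset `I(n)`. -/
theorem KnPoly_faces (n : ℕ) (hn : 2 ≤ n) :
    (∀ ι : Finset (Fin (n - 1) × Fin (n - 1)),
      (∀ p ∈ ι, ProperInt n p) → (∀ p ∈ ι, ∀ q ∈ ι, CompatInt n p q) →
        (KnFace n ι).Nonempty ∧ IsExposed ℝ (KnPoly n) (KnFace n ι) ∧
          Module.finrank ℝ (vectorSpan ℝ (KnFace n ι)) + ι.card + 2 = n) ∧
    (∀ F : Set (Fin (n - 1) → ℝ), IsExposed ℝ (KnPoly n) F → F.Nonempty →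
      ∃ ι : Finset (Fin (n - 1) × Fin (n - 1)),
        (∀ p ∈ ι, ProperInt n p) ∧ (∀ p ∈ ι, ∀ q ∈ ι, CompatInt n p q) ∧
          F = KnFace n ι) :=
  ⟨fun _ hprop hcomp => ⟨⟨_, KnPoly.centralPoint_mem_knFace hn hprop hcomp⟩,
    KnPoly.isExposed_knFace hprop, KnPoly.finrank_vectorSpan_knFace hn hprop hcomp⟩,
    fun _ hF hne => KnPoly.exists_eq_knFace_of_isExposed hn hF hne⟩
end

section
/- The projection π_n : Σ_n → Z_n\Σ_n ≅ Σ_{n-1} from the symmetric group to the coset space by the left action of the cyclic group of order n induces on Cycl(n) := k[Σ_{n-1}] a well-defined right Σ_n-module structure; moreover, the collection Cycl = {Cycl(n)} is a right module over the operad Ass: if σ' ≡ σ'' mod Z_l (left cosets of cyclic permutations), then for any σ_i ∈ Σ_{m_i}, σ'(σ_1,...,σ_l) ≡ σ''(σ_1,...,σ_l) mod Z_{m_1+...+m_l}. -/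
open Equiv

/-- Auxiliary equivalence splitting off the first block of a sigma type over `Fin (l+1)`. -/
def sigmaFinSucc (l : ℕ) (m : Fin (l + 1) → ℕ) :
    (Fin (m 0) ⊕ (Σ i : Fin l, Fin (m i.succ))) ≃ (Σ i : Fin (l + 1), Fin (m i)) where
  toFun x := Sum.elim (fun b => ⟨0, b⟩) (fun p => ⟨p.1.succ, p.2⟩) x
  invFun x := Fin.cases (motive := fun i => Fin (m i) → (Fin (m 0) ⊕ Σ i : Fin l, Fin (m i.succ)))
    (fun b => Sum.inl b) (fun i b => Sum.inr ⟨i, b⟩) x.1 x.2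
  left_inv x := by rcases x with b | ⟨i, b⟩ <;> simp
  right_inv x := by
    rcases x with ⟨i, b⟩
    induction i using Fin.cases <;> simp

/-- The lexicographic ("concatenation of blocks") equivalence
`(Σ i, Fin (m i)) ≃ Fin (∑ i, m i)`. -/
def finSigma : ∀ {l : ℕ} (m : Fin l → ℕ), (Σ i : Fin l, Fin (m i)) ≃ Fin (∑ i, m i)
  | 0, m => (Equiv.equivOfIsEmpty _ (Fin 0)).trans (finCongr (by simp))
  | l + 1, m =>
    ((sigmaFinSucc l m).symm.trans
      ((Equiv.sumCongr (Equiv.refl _) (finSigma (fun i => m i.succ))).trans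
        ((finSumFinEquiv).trans (finCongr (by rw [Fin.sum_univ_succ])))))

/-- The block composition `σ(σ_1, …, σ_l) = σ(m_1, …, m_l) · (σ_1 ⊕ ⋯ ⊕ σ_l)` in
`Σ_{m_1 + ⋯ + m_l}`: blocks of sizes `m i` are permuted according to `σ`, and the `i`-th
block is permuted internally by `τ i`. -/
def blockComp {l : ℕ} (m : Fin l → ℕ) (σ : Equiv.Perm (Fin l))
    (τ : ∀ i, Equiv.Perm (Fin (m i))) : Equiv.Perm (Fin (∑ i, m i)) :=
  ((finSigma m).symm.trans
    ((Equiv.sigmaCongr σ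
        (fun i => (τ i).trans (finCongr (congrArg m (σ.symm_apply_apply i).symm)))).trans
      ((finSigma fun j => m (σ.symm j)).trans (finCongr (Equiv.sum_comp σ.symm m)))))

/-- `a` and `b` lie in the same left coset of the cyclic group
`Z_n = ⟨(1 2 … n)⟩ ⊆ Σ_n`. -/
def cosetRel (n : ℕ) (a b : Equiv.Perm (Fin n)) : Prop :=
  ∃ z : ℕ, a = (finRotate n) ^ z * b

/-!
Right multiplication preserves left cosets of `Z_n`, which gives the action. For the operadic part
it suffices to treat `σ' = c σ''` with `c = finRotate l` the generator of `Z_l`. Composing with `c`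
moves the last block of `σ''(σ_1, …, σ_l)` to the front, which is a rotation of `Fin N`,
`N = ∑ m`, by the size of that block: `(c σ)(τ) = c_N ^ m (σ⁻¹ (last l)) · σ(τ)`. To check this,
note that the point `b` of block `i` lands at the total size of the blocks placed in front of
block `i`, plus `τ i b`, and these positions agree modulo `N`.
-/

open Finset

namespace Fin

lemma sum_Iio_succ {l : ℕ} (g : Fin (l + 1) → ℕ) (i : Fin l) :
    ∑ k ∈ Iio i.succ, g k = g 0 + ∑ k ∈ Iio i, g k.succ := by
  simp only [← filter_gt_eq_Iio, sum_filter, sum_univ_succ, succ_pos, if_true, succ_lt_succ_iff]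

lemma sum_Iio_last_add {l : ℕ} (g : Fin (l + 1) → ℕ) :
    ∑ k ∈ Iio (last l), g k + g (last l) = ∑ k, g k := by
  rw [add_comm, ← sum_insert (s := Iio (last l)) (by simp), Iio_insert]
  exact sum_congr (by ext; simp [le_last]) fun _ _ => rfl

end Fin

lemma finRotate_pow_apply_val (n c : ℕ) (x : Fin n) :
    ((finRotate n ^ c) x : ℕ) = (x + c) % n := by
  induction c with
  | zero => simp [Nat.mod_eq_of_lt x.isLt]
  | succ c ih =>
    have := x.neZero
    rw [pow_succ', Equiv.Perm.mul_apply, finRotate_apply, Fin.val_add, ih, Fin.val_one',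
      Nat.mod_add_mod, Nat.add_mod_mod, Nat.add_assoc]

lemma finRotate_lt_finRotate_iff {l : ℕ} {j : Fin (l + 1)} (hj : j ≠ Fin.last l)
    (k : Fin (l + 1)) :
    finRotate (l + 1) k < finRotate (l + 1) j ↔ k = Fin.last l ∨ k < j := by
  have hj' : (j : ℕ) ≠ l := fun h => hj (Fin.ext h)
  simp only [Fin.lt_def, coe_finRotate, Fin.ext_iff, Fin.val_last]
  split_ifs <;> omega

lemma sum_Iio_finRotate_modEq {l : ℕ} (g : Fin (l + 1) → ℕ) (j : Fin (l + 1)) :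
    ∑ k ∈ Iio (finRotate (l + 1) j), g ((finRotate (l + 1)).symm k)
      ≡ ∑ k ∈ Iio j, g k + g (Fin.last l) [MOD ∑ k, g k] := by
  by_cases hj : j = Fin.last l
  · subst hj
    have hempty : Iio (0 : Fin (l + 1)) = ∅ := Iio_eq_empty.mpr (by simp [IsMin])
    rw [finRotate_last, hempty, sum_empty, Fin.sum_Iio_last_add]
    exact (Nat.mod_self _).symm
  · have hpre : (Iio (finRotate (l + 1) j)).map (finRotate (l + 1)).symm.toEmbedding
        = insert (Fin.last l) (Iio j) := by
      ext k
      simp only [mem_map_equiv, Equiv.symm_symm, mem_Iio, mem_insert,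
        finRotate_lt_finRotate_iff hj]
    calc ∑ k ∈ Iio (finRotate (l + 1) j), g ((finRotate (l + 1)).symm k)
        = ∑ k ∈ (Iio (finRotate (l + 1) j)).map (finRotate (l + 1)).symm.toEmbedding, g k :=
          (sum_map _ (finRotate (l + 1)).symm.toEmbedding g).symm
      _ = ∑ k ∈ Iio j, g k + g (Fin.last l) := by
          rw [hpre, sum_insert (by simp [Fin.le_last]), add_comm]
      _ ≡ _ [MOD _] := rfl

lemma finSigma_apply_val : ∀ {l : ℕ} (m : Fin l → ℕ) (i : Fin l) (b : Fin (m i)),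
    (finSigma m ⟨i, b⟩ : ℕ) = ∑ k ∈ Iio i, m k + b
  | 0, _, i, _ => i.elim0
  | l + 1, m, i, b => by
    induction i using Fin.cases with
    | zero => simp [finSigma, sigmaFinSucc]
    | succ i =>
      simp [finSigma, sigmaFinSucc, finSigma_apply_val (fun k => m k.succ) i b,
        Fin.sum_Iio_succ]
      omega

lemma blockComp_finSigma_val {l : ℕ} (m : Fin l → ℕ) (σ : Equiv.Perm (Fin l))
    (τ : ∀ i, Equiv.Perm (Fin (m i))) (i : Fin l) (b : Fin (m i)) :
    (blockComp m σ τ (finSigma m ⟨i, b⟩) : ℕ) = ∑ k ∈ Iio (σ i), m (σ.symm k) + τ i b := by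
  simp [blockComp, Equiv.sigmaCongr, finSigma_apply_val]

lemma blockComp_finRotate_mul {l : ℕ} (m : Fin (l + 1) → ℕ) (σ : Equiv.Perm (Fin (l + 1)))
    (τ : ∀ i, Equiv.Perm (Fin (m i))) :
    blockComp m (finRotate (l + 1) * σ) τ
      = finRotate (∑ i, m i) ^ m (σ.symm (Fin.last l)) * blockComp m σ τ := by
  ext x
  obtain ⟨⟨i, b⟩, rfl⟩ := (finSigma m).surjective x
  have hlt := (blockComp m (finRotate (l + 1) * σ) τ (finSigma m ⟨i, b⟩)).isLt
  have hmod := (sum_Iio_finRotate_modEq (fun k => m (σ.symm k)) (σ i)).add_right (τ i b)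
  rw [Equiv.sum_comp σ.symm m, add_right_comm] at hmod
  rw [blockComp_finSigma_val] at hlt
  rw [Equiv.Perm.mul_apply, finRotate_pow_apply_val, blockComp_finSigma_val,
    blockComp_finSigma_val]
  exact (Nat.mod_eq_of_lt hlt).symm.trans hmod

lemma cosetRel_blockComp_finRotate_pow_mul {l : ℕ} (m : Fin l → ℕ) (z : ℕ)
    (σ : Equiv.Perm (Fin l)) (τ : ∀ i, Equiv.Perm (Fin (m i))) :
    cosetRel (∑ i, m i) (blockComp m (finRotate l ^ z * σ) τ) (blockComp m σ τ) := by
  cases l with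
  | zero => exact ⟨0, by rw [pow_zero, one_mul, Subsingleton.elim (finRotate 0 ^ z * σ) σ]⟩
  | succ l =>
    induction z with
    | zero => exact ⟨0, by simp⟩
    | succ z ih =>
      obtain ⟨w, hw⟩ := ih
      exact ⟨_ + w, by
        rw [pow_succ', mul_assoc, blockComp_finRotate_mul, hw, pow_add, mul_assoc]⟩

lemma cosetRel_mul_right {n : ℕ} {a b : Equiv.Perm (Fin n)} (h : cosetRel n a b)
    (ρ : Equiv.Perm (Fin n)) : cosetRel n (a * ρ) (b * ρ) :=
  let ⟨z, hz⟩ := h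
  ⟨z, by rw [hz, mul_assoc]⟩

/-- the projection `π_n : Σ_n → Z_n\Σ_n ≅ Σ_{n-1}` induces a well-defined
right `Σ_n`-action on `Cycl(n) = k[Σ_{n-1}] = k[Z_n\Σ_n]`, and `Cycl` is a right module
over the operad `Ass`: if `σ' ≡ σ''` mod `Z_l`, then for any `σ_i ∈ Σ_{m_i}`,
`σ'(σ_1, …, σ_l) ≡ σ''(σ_1, …, σ_l)` mod `Z_{m_1 + ⋯ + m_l}`. -/
theorem cycl_right_module_over_ass :
    (∀ n : ℕ, ∃ smul :
        Quot (cosetRel n) → Equiv.Perm (Fin n) → Quot (cosetRel n),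
      (∀ σ ρ, smul (Quot.mk _ σ) ρ = Quot.mk _ (σ * ρ)) ∧
      (∀ q, smul q 1 = q) ∧
      (∀ q ρ₁ ρ₂, smul q (ρ₁ * ρ₂) = smul (smul q ρ₁) ρ₂)) ∧
    (∀ (l : ℕ) (m : Fin l → ℕ), (∀ i, 1 ≤ m i) →
      ∀ σ' σ'' : Equiv.Perm (Fin l), cosetRel l σ' σ'' →
        ∀ τ : ∀ i, Equiv.Perm (Fin (m i)),
          cosetRel (∑ i, m i) (blockComp m σ' τ) (blockComp m σ'' τ)) := by
  refine ⟨fun n => ⟨fun q ρ => Quot.map (· * ρ) (fun _ _ h => cosetRel_mul_right h ρ) q,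
    fun _ _ => rfl, ?_, ?_⟩, ?_⟩
  · rintro ⟨σ⟩
    exact congrArg (Quot.mk _) (mul_one σ)
  · rintro ⟨σ⟩ ρ₁ ρ₂
    exact congrArg (Quot.mk _) (mul_assoc σ ρ₁ ρ₂).symm
  · rintro l m - σ' σ'' ⟨z, rfl⟩ τ
    exact cosetRel_blockComp_finRotate_pow_mul m z σ'' τ
end

section
/- The Ass-module Cycl is Koszul self-dual: with Cycl presented as the quadratic module ⟨g; Ass; g(μ) − g(μ)S₂₁⟩, the annihilator of the relation space G = span(g(μ)(1−S₂₁)) inside (X*∘(E*⊗sgn))(2) is again the sign representation, so Cycl! = Cycl. Concretely: in the Σ₂-module k[Σ₂] = 𝟙 ⊕ sgn, the annihilator of the sign representation under the pairing twisted by sgn is again sgn. -/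
open Equiv

/-- The generator `g(μ) − g(μ)S₂₁` of the relation space `G` of the quadratic module
`Cycl = ⟨g; Ass; g(μ) − g(μ)S₂₁⟩`, viewed inside `(X ∘ Ass)(2) ≅ k[Σ₂]` (functions on
`Σ₂`): the difference of the two basis vectors, spanning the sign representation. -/
noncomputable def sgnVector : Equiv.Perm (Fin 2) → ℚ :=
  fun σ => if σ = 1 then 1 else -1

/-- The pairing on `k[Σ₂]` twisted by the sign character (the pairing between
`(X ∘ Ass)(2)` and `(X* ∘ (Ass* ⊗ sgn))(2)` used to define the Koszul dual module). -/
noncomputable def twistedPairing (v w : Equiv.Perm (Fin 2) → ℚ) : ℚ :=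
  ∑ σ : Equiv.Perm (Fin 2), ((Equiv.Perm.sign σ : ℤ) : ℚ) * v σ * w σ

lemma perm2 (σ : Equiv.Perm (Fin 2)) : σ = 1 ∨ σ = Equiv.swap 0 1 := by
  revert σ; decide

lemma swap_ne_one : (Equiv.swap (0 : Fin 2) 1) ≠ 1 := by decide

lemma sum2 (f : Equiv.Perm (Fin 2) → ℚ) :
    ∑ σ : Equiv.Perm (Fin 2), f σ = f 1 + f (Equiv.swap 0 1) :=
  Fintype.sum_eq_add _ _ (Ne.symm swap_ne_one)
    (fun c hc => absurd (perm2 c) (by tauto))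

lemma pairing_eval (v w : Equiv.Perm (Fin 2) → ℚ) :
    twistedPairing v w = v 1 * w 1 - v (Equiv.swap 0 1) * w (Equiv.swap 0 1) := by
  unfold twistedPairing
  rw [sum2]
  rw [Equiv.Perm.sign_one, Equiv.Perm.sign_swap (by decide)]
  push_cast
  ring

lemma sgnVector_one : sgnVector 1 = 1 := by simp [sgnVector]

lemma sgnVector_swap : sgnVector (Equiv.swap 0 1) = -1 := by
  simp [sgnVector, swap_ne_one]

/-- the `Ass`-module `Cycl` is Koszul self-dual, `Cycl! = Cycl`.
Concretely: in the `Σ₂`-module `k[Σ₂] = 𝟙 ⊕ sgn`, the annihilator of the sign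
representation (the relation space `G` of `Cycl`) under the pairing twisted by `sgn`
is again the sign representation. -/
theorem cycl_koszul_self_dual :
    (Submodule.span ℚ {(fun _ => 1 : Equiv.Perm (Fin 2) → ℚ)} ⊔
        Submodule.span ℚ {sgnVector} = ⊤) ∧
    {v : Equiv.Perm (Fin 2) → ℚ |
        ∀ w ∈ Submodule.span ℚ {sgnVector}, twistedPairing v w = 0} =
      ↑(Submodule.span ℚ {sgnVector}) := by
  constructor
  · rw [eq_top_iff]
    intro v _
    have hv : v = ((v 1 + v (Equiv.swap 0 1)) / 2) • (fun _ => 1 : Equiv.Perm (Fin 2) → ℚ)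
        + ((v 1 - v (Equiv.swap 0 1)) / 2) • sgnVector := by
      funext σ
      rcases perm2 σ with h | h <;> subst h <;>
        simp [sgnVector_one, sgnVector_swap] <;> ring
    rw [hv]
    exact Submodule.add_mem _
      (Submodule.mem_sup_left (Submodule.smul_mem _ _ (Submodule.subset_span rfl)))
      (Submodule.mem_sup_right (Submodule.smul_mem _ _ (Submodule.subset_span rfl)))
  · ext v
    simp only [Set.mem_setOf_eq, SetLike.mem_coe]
    constructor
    · intro h
      have h0 := h sgnVector (Submodule.subset_span rfl)
      rw [pairing_eval, sgnVector_one, sgnVector_swap] at h0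
      have hv : v = (v 1) • sgnVector := by
        funext σ
        rcases perm2 σ with hσ | hσ <;> subst hσ <;>
          simp [sgnVector_one, sgnVector_swap] <;> linarith
      rw [hv]
      exact Submodule.smul_mem _ _ (Submodule.subset_span rfl)
    · intro hv w hw
      rw [Submodule.mem_span_singleton] at hv hw
      obtain ⟨c, rfl⟩ := hv
      obtain ⟨d, rfl⟩ := hw
      rw [pairing_eval]
      simp [sgnVector_one, sgnVector_swap]
end
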